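/- arXiv:2605.25137 — 5 statements merged into one kernel-verified Lean document; each statement's English description precedes it below -/
import Mathlib

section
/- Let m ≥ 1000 and define η_m(ρ) = sin[(π/2)((m/(m-1))ρ - 1/(m-1))] for ρ ∈ [1/m, 1]. Then for all ρ ∈ [1/m, 1], one has 0 ≤ η_m(ρ) + ρ·η_m'(ρ) ≤ 7/5. -/
open MeasureTheory Real Set

/-!
Substituting `θ = (π/2)(mρ - 1)/(m - 1) ∈ [0, π/2]` and `ε = (π/2)/(m - 1)` turns
`η ρ + ρ η' ρ` into `sin θ + (θ + ε) cos θ`, which is nonnegative since `sin` and `cos` are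
nonnegative on `[0, π/2]`. For the upper bound, the Taylor bounds `sin θ ≤ θ - θ³/6 + θ⁵/120` and
`cos θ ≤ 1 - θ²/2 + θ⁴/24` give `sin θ + θ cos θ ≤ 2θ - 2θ³/3 + θ⁵/20`, whose maximum on
`[0, π/2]` (near `θ ≈ 1.08`) is about `1.394`; this leaves room for `ε cos θ ≤ ε < 1/625`.
-/

lemma le_of_hasDerivAt_nonneg_Ici {f f' : ℝ → ℝ} (hf : ∀ y, HasDerivAt f (f' y) y)
    (hf' : ∀ y, 0 ≤ y → 0 ≤ f' y) {x : ℝ} (hx : 0 ≤ x) : f 0 ≤ f x :=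
  monotoneOn_of_hasDerivWithinAt_nonneg (convex_Ici 0)
    (fun y _ => (hf y).continuousAt.continuousWithinAt) (fun y _ => (hf y).hasDerivWithinAt)
    (fun y hy => hf' y (by simpa using (interior_subset hy : y ∈ Ici (0:ℝ))))
    self_mem_Ici hx hx

lemma cos_le_quartic {x : ℝ} (hx : 0 ≤ x) : cos x ≤ 1 - x ^ 2 / 2 + x ^ 4 / 24 := by
  have h := le_of_hasDerivAt_nonneg_Ici (f := fun y => 1 - y ^ 2 / 2 + y ^ 4 / 24 - cos y)
    (fun y => ((((hasDerivAt_const y (1:ℝ)).sub ((hasDerivAt_pow 2 y).div_const 2)).add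
      ((hasDerivAt_pow 4 y).div_const 24)).sub (hasDerivAt_cos y)))
    (fun y hy => by nlinarith [sin_ge_sub_cube hy]) hx
  simp only [cos_zero] at h
  linarith

lemma sin_le_quintic {x : ℝ} (hx : 0 ≤ x) : sin x ≤ x - x ^ 3 / 6 + x ^ 5 / 120 := by
  have h := le_of_hasDerivAt_nonneg_Ici (f := fun y => y - y ^ 3 / 6 + y ^ 5 / 120 - sin y)
    (fun y => ((((hasDerivAt_id y).sub ((hasDerivAt_pow 3 y).div_const 6)).add
      ((hasDerivAt_pow 5 y).div_const 120)).sub (hasDerivAt_sin y)))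
    (fun y hy => by nlinarith [cos_le_quartic hy]) hx
  simp only [sin_zero] at h
  linarith

lemma sin_add_mul_cos_le {θ : ℝ} (h₀ : 0 ≤ θ) (h₁ : θ ≤ π / 2) :
    sin θ + θ * cos θ ≤ 7 / 5 - 1 / 625 := by
  have hθ : θ ≤ 1.5708 := by linarith [pi_lt_d4]
  have hcos : θ * cos θ ≤ θ * (1 - θ ^ 2 / 2 + θ ^ 4 / 24) :=
    mul_le_mul_of_nonneg_left (cos_le_quartic h₀) h₀
  have hpoly : 2 * θ - 2 / 3 * θ ^ 3 + θ ^ 5 / 20 ≤ 7 / 5 - 1 / 625 := by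
    nlinarith [mul_nonneg h₀ (sq_nonneg (θ - 1.083)),
      mul_nonneg (sub_nonneg.2 hθ) (sq_nonneg (θ - 1.083))]
  nlinarith [sin_le_quintic h₀]

lemma sin_add_add_mul_cos_mem_Icc {θ ε : ℝ} (h₀ : 0 ≤ θ) (h₁ : θ ≤ π / 2) (hε₀ : 0 ≤ ε)
    (hε₁ : ε ≤ 1 / 625) : sin θ + (θ + ε) * cos θ ∈ Icc 0 (7 / 5) := by
  have hsin : 0 ≤ sin θ := sin_nonneg_of_nonneg_of_le_pi h₀ (by linarith [pi_pos])
  have hcos : cos θ ∈ Icc 0 1 := ⟨cos_nonneg_of_mem_Icc ⟨by linarith [pi_pos], h₁⟩, cos_le_one θ⟩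
  constructor
  · have := mul_nonneg (add_nonneg h₀ hε₀) hcos.1
    linarith
  · nlinarith [sin_add_mul_cos_le h₀ h₁, mul_le_mul_of_nonneg_left hcos.2 hε₀]

/-- For `m ≥ 1000` and `η_m(ρ) = sin((π/2)((m/(m-1))ρ - 1/(m-1)))`, one has
`0 ≤ η_m(ρ) + ρ·η_m'(ρ) ≤ 7/5` for all `ρ ∈ [1/m, 1]`. -/
theorem cutoff_bound_one (m : ℕ) (hm : 1000 ≤ m) (η : ℝ → ℝ)
    (hη : ∀ ρ : ℝ, η ρ = Real.sin (π/2 * ((m / ((m : ℝ) - 1)) * ρ - 1 / ((m : ℝ) - 1)))) :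
    ∀ ρ ∈ Set.Icc (1/(m:ℝ)) 1,
      0 ≤ η ρ + ρ * deriv η ρ ∧ η ρ + ρ * deriv η ρ ≤ 7/5 := by
  rintro ρ ⟨hρ₀, hρ₁⟩
  have hm₁ : (999 : ℝ) ≤ m - 1 := by
    have : (1000 : ℝ) ≤ m := by exact_mod_cast hm
    linarith
  have hm₀ : (0 : ℝ) < m := by linarith
  set θ := π / 2 * ((m * ρ - 1) / (m - 1)) with hθ
  set ε := π / 2 / (m - 1) with hε
  have hη' : η = fun x => sin (π / 2 * ((m * x - 1) / (m - 1))) := by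
    funext x
    rw [hη, div_mul_eq_mul_div (m : ℝ), div_sub_div_same]
  have hderiv : HasDerivAt η (cos θ * (π / 2 * (m / (m - 1)))) ρ := by
    rw [hη']
    simpa using ((((hasDerivAt_id ρ).const_mul (m : ℝ)).sub_const 1).div_const
      ((m : ℝ) - 1)).const_mul (π / 2) |>.sin
  have hsum : η ρ + ρ * deriv η ρ = sin θ + (θ + ε) * cos θ := by
    rw [hderiv.deriv, hη']
    simp only [hθ, hε]
    field_simp
    ring
  have ht : (m * ρ - 1) / (m - 1) ∈ Icc (0 : ℝ) 1 := by
    have : 1 ≤ m * ρ := by rwa [div_le_iff₀' hm₀] at hρ₀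
    exact ⟨div_nonneg (by linarith) (by linarith),
      (div_le_one (by linarith)).2 (by nlinarith)⟩
  have hε₁ : ε ≤ 1 / 625 :=
    calc ε ≤ π / 2 / 999 := div_le_div_of_nonneg_left (by positivity) (by norm_num) hm₁
      _ ≤ 1 / 625 := by linarith [pi_lt_d4]
  rw [hsum]
  exact sin_add_add_mul_cos_mem_Icc (mul_nonneg (by positivity) ht.1)
    (mul_le_of_le_one_right (by positivity) ht.2) (by positivity) hε₁
end

section
/- Let m ≥ 1000 and define η_m(ρ) = sin[(π/2)((m/(m-1))ρ - 1/(m-1))] for ρ ∈ [1/m, 1]. Then for all ρ ∈ [1/m, 1], one has 0 ≤ 3η_m(ρ) + ρ·η_m'(ρ) ≤ 13/4. -/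
open Real Set

/-!
Writing `η_m(ρ) = sin θ` with `θ = aρ - b`, `a = (π/2)·m/(m-1)` and `b = (π/2)/(m-1)`, the chain
rule gives `3η_m + ρη_m' = 3 sin θ + (θ + b) cos θ`, where `θ ∈ [0, π/2]` and `b ≤ 1/625` once
`m ≥ 1000`. Nonnegativity is then clear. For the upper bound put `u = π/2 - θ`: the expression
becomes `3 cos u + (π/2 + b - u) sin u ≤ 3(1 - u²/2 + u⁴/24) + (1.5724 - u) u`, a quartic whose
maximum on `[0, π/2]` is about `3.2485 < 13/4`.
-/

namespace Real

theorem cos_le_one_sub_sq_div_two_add_pow_four_div (x : ℝ) :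
    cos x ≤ 1 - x ^ 2 / 2 + x ^ 4 / 24 := by
  suffices h : ∀ y, 0 ≤ y → cos y ≤ 1 - y ^ 2 / 2 + y ^ 4 / 24 by
    have := h |x| (abs_nonneg x)
    rwa [cos_abs, sq_abs, Even.pow_abs ⟨2, rfl⟩] at this
  have hderiv (y : ℝ) : HasDerivAt (fun y ↦ 1 - y ^ 2 / 2 + y ^ 4 / 24 - cos y)
      (sin y - (y - y ^ 3 / 6)) y := by
    refine ((((hasDerivAt_pow 2 y).div_const 2).const_sub 1).add
      ((hasDerivAt_pow 4 y).div_const 24)).sub (hasDerivAt_cos y) |>.congr_deriv ?_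
    norm_num
    ring
  have hmono : MonotoneOn (fun y ↦ 1 - y ^ 2 / 2 + y ^ 4 / 24 - cos y) (Ici 0) :=
    monotoneOn_of_hasDerivWithinAt_nonneg (convex_Ici 0) (by fun_prop)
      (fun y _ ↦ (hderiv y).hasDerivWithinAt)
      (fun y hy ↦ sub_nonneg.2 (sin_ge_sub_cube (interior_subset hy)))
  intro y hy
  simpa using hmono self_mem_Ici hy hy

theorem deriv_sin_mul_sub (a b x : ℝ) :
    deriv (fun x ↦ sin (a * x - b)) x = a * cos (a * x - b) := by
  rw [(((hasDerivAt_id' x).const_mul a).sub_const b).sin.deriv, mul_one, mul_comm]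

theorem three_mul_sin_add_mul_cos_nonneg {θ δ : ℝ} (hθ : θ ∈ Icc 0 (π / 2)) (hδ : 0 ≤ δ) :
    0 ≤ 3 * sin θ + (θ + δ) * cos θ := by
  obtain ⟨hθ₀, hθ₁⟩ := hθ
  have hsin := sin_nonneg_of_nonneg_of_le_pi hθ₀ (by linarith [pi_pos])
  have hcos := cos_nonneg_of_mem_Icc ⟨by linarith [pi_pos], hθ₁⟩
  exact add_nonneg (mul_nonneg (by norm_num) hsin) (mul_nonneg (by linarith) hcos)

theorem three_mul_sin_add_mul_cos_le {θ δ : ℝ} (hθ : θ ∈ Icc 0 (π / 2)) (hδ : δ ≤ 1 / 625) :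
    3 * sin θ + (θ + δ) * cos θ ≤ 13 / 4 := by
  obtain ⟨u, rfl⟩ : ∃ u, θ = π / 2 - u := ⟨π / 2 - θ, by ring⟩
  obtain ⟨hu₀, hu₁⟩ : 0 ≤ u ∧ u ≤ π / 2 := by constructor <;> linarith [hθ.1, hθ.2]
  have hc : π / 2 + 1 / 625 ≤ 1.5724 := by linarith [pi_lt_d4]
  rw [sin_pi_div_two_sub, cos_pi_div_two_sub]
  calc 3 * cos u + (π / 2 - u + δ) * sin u
      ≤ 3 * cos u + (π / 2 + 1 / 625 - u) * sin u := by
        gcongr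
        · exact sin_nonneg_of_nonneg_of_le_pi hu₀ (by linarith [pi_pos])
        · linarith
    _ ≤ 3 * (1 - u ^ 2 / 2 + u ^ 4 / 24) + (π / 2 + 1 / 625 - u) * u :=
      add_le_add (mul_le_mul_of_nonneg_left (cos_le_one_sub_sq_div_two_add_pow_four_div u)
        (by norm_num)) (mul_le_mul_of_nonneg_left (sin_le hu₀) (by linarith))
    _ ≤ 3 * (1 - u ^ 2 / 2 + u ^ 4 / 24) + (1.5724 - u) * u := by gcongr
    _ ≤ 13 / 4 := by
      have hu₂ : u ≤ 2 := by linarith [pi_lt_d2]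
      nlinarith [sq_nonneg (u - 0.318), mul_nonneg (sub_nonneg.2 hu₂) (sq_nonneg (u - 0.318)),
        mul_nonneg (mul_nonneg hu₀ (sub_nonneg.2 hu₂)) (sq_nonneg (u - 0.318))]

end Real

theorem mul_sub_one_div_sub_one_mem_Icc {m ρ : ℝ} (hm : 1 < m) (hρ : ρ ∈ Icc (1 / m) 1) :
    (m * ρ - 1) / (m - 1) ∈ Icc 0 1 := by
  have hm₁ : 0 < m - 1 := sub_pos.2 hm
  have hmρ : 1 ≤ m * ρ := by rw [← div_le_iff₀' (by linarith)]; exact hρ.1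
  exact ⟨div_nonneg (by linarith) hm₁.le, (div_le_one hm₁).2 (by nlinarith [hρ.2])⟩

/-- For `m ≥ 1000` and `η_m(ρ) = sin((π/2)((m/(m-1))ρ - 1/(m-1)))`, one has
`0 ≤ 3η_m(ρ) + ρ·η_m'(ρ) ≤ 13/4` for all `ρ ∈ [1/m, 1]`. -/
theorem cutoff_bound_two (m : ℕ) (hm : 1000 ≤ m) (η : ℝ → ℝ)
    (hη : ∀ ρ : ℝ, η ρ = Real.sin (π/2 * ((m / ((m : ℝ) - 1)) * ρ - 1 / ((m : ℝ) - 1)))) :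
    ∀ ρ ∈ Set.Icc (1/(m:ℝ)) 1,
      0 ≤ 3 * η ρ + ρ * deriv η ρ ∧ 3 * η ρ + ρ * deriv η ρ ≤ 13/4 := by
  intro ρ hρ
  have hm' : (1000 : ℝ) ≤ m := by exact_mod_cast hm
  have hm₁ : (0 : ℝ) < m - 1 := by linarith
  have hηab : η = fun x ↦ sin (π / 2 * (m / (m - 1)) * x - π / 2 / (m - 1)) :=
    funext fun x ↦ by rw [hη]; ring_nf
  set a : ℝ := π / 2 * (m / (m - 1))
  set b : ℝ := π / 2 / (m - 1) with hb
  have hθ : a * ρ - b ∈ Icc 0 (π / 2) := by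
    have hθ_eq : a * ρ - b = π / 2 * ((m * ρ - 1) / (m - 1)) := by
      simp only [a, b]; field_simp
    obtain ⟨h₀, h₁⟩ := mul_sub_one_div_sub_one_mem_Icc (by linarith) hρ
    rw [hθ_eq]
    exact ⟨by positivity, mul_le_of_le_one_right (by positivity) h₁⟩
  have hb₀ : 0 ≤ b := div_nonneg (by positivity) hm₁.le
  have hb₁ : b ≤ 1 / 625 := by
    rw [hb, div_le_div_iff₀ hm₁ (by norm_num)]
    linarith [pi_lt_d2]
  have hexpr : 3 * η ρ + ρ * deriv η ρ =
      3 * sin (a * ρ - b) + (a * ρ - b + b) * cos (a * ρ - b) := by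
    rw [hηab, deriv_sin_mul_sub]; ring
  rw [hexpr]
  exact ⟨three_mul_sin_add_mul_cos_nonneg hθ hb₀, three_mul_sin_add_mul_cos_le hθ hb₁⟩
end

section
/- Let 0 < α ≤ π/4, a = π/2 - α, b = π/2 + α. For every f ∈ H¹₀(a,b), one has ∫ₐᵇ f(φ)² sin φ dφ ≤ C_{α,B} ∫ₐᵇ f'(φ)² sin φ dφ, where C_{α,B} = 4α²/(π² - 2α²/cos²α). In particular C_{π/6,B} = 3/25. -/
open MeasureTheory Real Set
open scoped Interval

/-! Picone's argument. If `h` satisfies the Riccati inequality `(h w)' + h² w ≤ -λ w` on `[a, b]`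
and `f` vanishes at both ends, then `0 ≤ ∫ (f' - h f)² w` together with `∫ (f² h w)' = 0` gives
`λ ∫ f² w ≤ ∫ f'² w`. For `w = sin` take `h = ψ'/ψ` with `ψ x = cos (m (x - π/2)) / √(sin x)`:
then `(h sin)' + h² sin = (1/2 - m² + tan² (x - π/2) / 4) sin x`, where `tan² (x - π/2) ≤ tan² α`.
The choice `m² = π²/(4α²) - tan² α / 4` keeps `ψ` positive on the closed interval and gives
`λ = π²/(4α²) - 1/2 - tan² α / 2`, the reciprocal of the stated constant. -/

section WeightedPoincare

variable {a b : ℝ} {w : ℝ → ℝ}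

theorem IntervalIntegrable.mul_continuousOn_of_weight {F g : ℝ → ℝ}
    (hF : IntervalIntegrable (fun x => F x * w x) volume a b) (hw : ContinuousOn w (uIcc a b))
    (hw0 : ∀ x ∈ uIcc a b, w x ≠ 0) (hg : ContinuousOn g (uIcc a b)) :
    IntervalIntegrable (fun x => F x * g x) volume a b := by
  refine (hF.mul_continuousOn (hg.div hw hw0)).congr_ae ?_
  filter_upwards [ae_restrict_mem measurableSet_uIoc] with x hx
  have := hw0 x (uIoc_subset_uIcc hx)
  rw [Pi.div_apply]; field_simp

theorem intervalIntegrable_mul_mul_weight {u v : ℝ → ℝ}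
    (hu : AEStronglyMeasurable u (volume.restrict (Ι a b)))
    (hv : AEStronglyMeasurable v (volume.restrict (Ι a b)))
    (hw : ContinuousOn w (uIcc a b)) (hw0 : ∀ x ∈ uIcc a b, 0 ≤ w x)
    (hu2 : IntervalIntegrable (fun x => u x ^ 2 * w x) volume a b)
    (hv2 : IntervalIntegrable (fun x => v x ^ 2 * w x) volume a b) :
    IntervalIntegrable (fun x => u x * v x * w x) volume a b := by
  rw [intervalIntegrable_iff] at *
  refine Integrable.mono' (hu2.add hv2) ?_ ?_
  · exact (hu.mul hv).mul ((hw.mono uIoc_subset_uIcc).aestronglyMeasurable measurableSet_uIoc)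
  · filter_upwards [ae_restrict_mem measurableSet_uIoc] with x hx
    have hwx := hw0 x (uIoc_subset_uIcc hx)
    rw [norm_mul, norm_mul, Real.norm_of_nonneg hwx, Real.norm_eq_abs, Real.norm_eq_abs]
    have : |u x| * |v x| ≤ u x ^ 2 + v x ^ 2 := by
      nlinarith [sq_abs (u x), sq_abs (v x), sq_nonneg (|u x| - |v x|), abs_nonneg (u x),
        abs_nonneg (v x)]
    simpa only [Pi.add_apply, add_mul] using mul_le_mul_of_nonneg_right this hwx

theorem weighted_poincare_of_riccati {f f' w' h h' : ℝ → ℝ} {c : ℝ} (hab : a ≤ b)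
    (hf : ∀ x ∈ Icc a b, HasDerivAt f (f' x) x) (hw : ∀ x ∈ Icc a b, HasDerivAt w (w' x) x)
    (hh : ∀ x ∈ Icc a b, HasDerivAt h (h' x) x) (hw' : ContinuousOn w' (Icc a b))
    (hh' : ContinuousOn h' (Icc a b)) (hw0 : ∀ x ∈ Icc a b, 0 < w x)
    (hriccati : ∀ x ∈ Icc a b, h' x * w x + h x * w' x + h x ^ 2 * w x ≤ -c * w x)
    (hf2 : IntervalIntegrable (fun x => f x ^ 2 * w x) volume a b)
    (hf'2 : IntervalIntegrable (fun x => f' x ^ 2 * w x) volume a b)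
    (hfa : f a = 0) (hfb : f b = 0) :
    c * ∫ x in a..b, f x ^ 2 * w x ≤ ∫ x in a..b, f' x ^ 2 * w x := by
  rw [← uIcc_of_le hab] at hf hw hh hw' hh' hw0 hriccati
  have cont {g g' : ℝ → ℝ} (hg : ∀ x ∈ [[a, b]], HasDerivAt g (g' x) x) : ContinuousOn g [[a, b]] :=
    fun x hx => (hg x hx).continuousAt.continuousWithinAt
  set R := fun x => h' x * w x + h x * w' x + h x ^ 2 * w x
  -- `D` is the derivative of `f² h w`, which vanishes at both endpoints
  set D := fun x => 2 * (f x * f' x * w x * h x) + f x ^ 2 * (h' x * w x + h x * w' x)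
  have hf'_meas : AEStronglyMeasurable f' (volume.restrict (Ι a b)) := by
    refine (measurable_deriv f).aestronglyMeasurable.congr ?_
    filter_upwards [ae_restrict_mem measurableSet_uIoc] with x hx
    exact (hf x (uIoc_subset_uIcc hx)).deriv
  have hD_int : IntervalIntegrable D volume a b := by
    refine ((intervalIntegrable_mul_mul_weight ?_ hf'_meas (cont hw) (fun x hx => (hw0 x hx).le)
      hf2 hf'2).mul_continuousOn (cont hh)).const_mul 2 |>.add ?_
    · exact ((cont hf).mono uIoc_subset_uIcc).aestronglyMeasurable measurableSet_uIoc
    · exact hf2.mul_continuousOn_of_weight (cont hw) (fun x hx => (hw0 x hx).ne')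
        ((hh'.mul (cont hw)).add ((cont hh).mul hw'))
  have hD : ∫ x in a..b, D x = 0 := by
    rw [intervalIntegral.integral_eq_sub_of_hasDerivAt (f := fun x => f x ^ 2 * (h x * w x))
      (fun x hx => ?_) hD_int]
    · simp [hfa, hfb]
    · refine (((hf x hx).pow 2).mul ((hh x hx).mul (hw x hx))).congr_deriv ?_
      simp only [D, Pi.mul_apply, Pi.pow_apply]; push_cast; ring
  have hR_int : IntervalIntegrable (fun x => f x ^ 2 * R x) volume a b :=
    hf2.mul_continuousOn_of_weight (cont hw) (fun x hx => (hw0 x hx).ne')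
      (((hh'.mul (cont hw)).add ((cont hh).mul hw')).add (((cont hh).pow 2).mul (cont hw)))
  have key := calc
    0 ≤ ∫ x in a..b, f' x ^ 2 * w x + f x ^ 2 * R x - D x := by
      refine intervalIntegral.integral_nonneg hab fun x hx => ?_
      rw [← uIcc_of_le hab] at hx
      have := (hw0 x hx).le
      refine (mul_nonneg (sq_nonneg (f' x - h x * f x)) this).trans_eq ?_
      simp only [R, D]; ring
    _ = (∫ x in a..b, f' x ^ 2 * w x) + (∫ x in a..b, f x ^ 2 * R x) - ∫ x in a..b, D x := by
      rw [intervalIntegral.integral_sub (hf'2.add hR_int) hD_int,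
        intervalIntegral.integral_add hf'2 hR_int]
    _ ≤ (∫ x in a..b, f' x ^ 2 * w x) + (∫ x in a..b, -c * (f x ^ 2 * w x)) - 0 := by
      rw [hD]
      gcongr
      refine intervalIntegral.integral_mono_on hab hR_int (hf2.const_mul _) fun x hx => ?_
      rw [← uIcc_of_le hab] at hx
      nlinarith [mul_le_mul_of_nonneg_left (hriccati x hx) (sq_nonneg (f x))]
  rw [intervalIntegral.integral_const_mul] at key
  linarith

end WeightedPoincare

theorem hasDerivAt_tan_one_add_sq {x : ℝ} (hx : cos x ≠ 0) : HasDerivAt tan (1 + tan x ^ 2) x := by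
  convert hasDerivAt_tan hx using 1
  rw [← inv_one_add_tan_sq hx, one_div, inv_inv]

theorem HasDerivAt.tan {g : ℝ → ℝ} {g' x : ℝ} (hg : HasDerivAt g g' x)
    (hx : Real.cos (g x) ≠ 0) :
    HasDerivAt (fun y => Real.tan (g y)) ((1 + Real.tan (g x) ^ 2) * g') x :=
  (hasDerivAt_tan_one_add_sq hx).comp x hg

theorem sq_tan_le_sq_tan_of_abs_le {x α : ℝ} (hα : α < π / 2) (hx : |x| ≤ α) :
    tan x ^ 2 ≤ tan α ^ 2 := by
  obtain ⟨h₁, h₂⟩ := abs_le.mp hx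
  have hα0 : 0 ≤ α := (abs_nonneg x).trans hx
  have mem : ∀ y, |y| ≤ α → y ∈ Ioo (-(π / 2)) (π / 2) := fun y hy =>
    abs_lt.mp (hy.trans_lt hα)
  refine sq_le_sq' ?_ (strictMonoOn_tan.monotoneOn (mem x hx) (mem α (abs_of_nonneg hα0).le) h₂)
  rw [← tan_neg]
  exact strictMonoOn_tan.monotoneOn (mem (-α) (by rw [abs_neg, abs_of_nonneg hα0])) (mem x hx) h₁

noncomputable def testLogDeriv (m x : ℝ) : ℝ := tan (x - π / 2) / 2 - m * tan (m * (x - π / 2))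

theorem hasDerivAt_testLogDeriv {m x : ℝ} (hx : cos (x - π / 2) ≠ 0)
    (hmx : cos (m * (x - π / 2)) ≠ 0) :
    HasDerivAt (testLogDeriv m)
      ((1 + tan (x - π / 2) ^ 2) / 2 - m ^ 2 * (1 + tan (m * (x - π / 2)) ^ 2)) x := by
  have hsub : HasDerivAt (fun y => y - π / 2) 1 x := (hasDerivAt_id' x).sub_const _
  refine (((hsub.tan hx).div_const 2).sub (((hsub.const_mul m).tan hmx).const_mul m)).congr_deriv ?_
  ring

theorem testLogDeriv_riccati_eq {m x : ℝ} (hx : cos (x - π / 2) ≠ 0) :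
    ((1 + tan (x - π / 2) ^ 2) / 2 - m ^ 2 * (1 + tan (m * (x - π / 2)) ^ 2)) * sin x
      + testLogDeriv m x * cos x + testLogDeriv m x ^ 2 * sin x
      = (1 / 2 - m ^ 2 + tan (x - π / 2) ^ 2 / 4) * sin x := by
  have hcos : cos x = -tan (x - π / 2) * sin x := by
    rw [cos_sub_pi_div_two] at hx
    rw [tan_eq_sin_div_cos, sin_sub_pi_div_two, cos_sub_pi_div_two]
    field_simp
  rw [hcos, testLogDeriv]
  ring

theorem integral_sq_mul_sin_le {α m : ℝ} {f f' : ℝ → ℝ} (hα : 0 ≤ α) (hα2 : α < π / 2)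
    (hm : 0 ≤ m) (hmα : m * α < π / 2)
    (hf : ∀ x ∈ Icc (π / 2 - α) (π / 2 + α), HasDerivAt f (f' x) x)
    (hf2 : IntervalIntegrable (fun x => f x ^ 2 * sin x) volume (π / 2 - α) (π / 2 + α))
    (hf'2 : IntervalIntegrable (fun x => f' x ^ 2 * sin x) volume (π / 2 - α) (π / 2 + α))
    (hfa : f (π / 2 - α) = 0) (hfb : f (π / 2 + α) = 0) :
    (m ^ 2 - 1 / 2 - tan α ^ 2 / 4) * ∫ x in (π / 2 - α)..(π / 2 + α), f x ^ 2 * sin x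
      ≤ ∫ x in (π / 2 - α)..(π / 2 + α), f' x ^ 2 * sin x := by
  have habs : ∀ x ∈ Icc (π / 2 - α) (π / 2 + α), |x - π / 2| ≤ α := fun x hx =>
    abs_le.mpr ⟨by linarith [hx.1], by linarith [hx.2]⟩
  have hcos {y : ℝ} (hy : |y| < π / 2) : 0 < cos y := cos_pos_of_mem_Ioo (abs_lt.mp hy)
  have hc₁ : ∀ x ∈ Icc (π / 2 - α) (π / 2 + α), 0 < cos (x - π / 2) := fun x hx =>
    hcos ((habs x hx).trans_lt hα2)
  have hc₂ : ∀ x ∈ Icc (π / 2 - α) (π / 2 + α), 0 < cos (m * (x - π / 2)) := fun x hx =>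
    hcos (by rw [abs_mul, abs_of_nonneg hm]; nlinarith [habs x hx])
  refine weighted_poincare_of_riccati (by linarith) hf (fun x _ => hasDerivAt_sin x)
    (fun x hx => hasDerivAt_testLogDeriv (hc₁ x hx).ne' (hc₂ x hx).ne') continuous_cos.continuousOn
    (fun x hx => ?_) (fun x hx => cos_sub_pi_div_two x ▸ hc₁ x hx) (fun x hx => ?_) hf2 hf'2 hfa hfb
  · have := continuousAt_tan.2 (hc₁ x hx).ne'
    have := continuousAt_tan.2 (hc₂ x hx).ne'
    exact ContinuousAt.continuousWithinAt (by fun_prop)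
  · rw [testLogDeriv_riccati_eq (hc₁ x hx).ne']
    have := sq_tan_le_sq_tan_of_abs_le hα2 (habs x hx)
    have := cos_sub_pi_div_two x ▸ hc₁ x hx
    nlinarith

theorem poincare_constant_pi_div_six :
    4 * (π / 6) ^ 2 / (π ^ 2 - 2 * (π / 6) ^ 2 / cos (π / 6) ^ 2) = 3 / 25 := by
  have hcos : cos (π / 6) ^ 2 = 3 / 4 := by
    rw [cos_pi_div_six, div_pow, sq_sqrt (by norm_num)]
    norm_num
  rw [hcos]
  field_simp
  ring

/-- Weighted Poincaré inequality with weight `sin φ` on `(π/2-α, π/2+α)` for functions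
vanishing at both endpoints, with constant `C_{α,B} = 4α²/(π² - 2α²/cos²α)`;
and `C_{π/6,B} = 3/25`. -/
theorem weighted_poincare_zero_boundary (α : ℝ) (hα : 0 < α) (hα' : α ≤ π/4)
    (f f' : ℝ → ℝ)
    (hderiv : ∀ x ∈ Set.Icc (π/2 - α) (π/2 + α), HasDerivAt f (f' x) x)
    (hf2 : IntervalIntegrable (fun x => f x ^ 2 * Real.sin x) volume (π/2 - α) (π/2 + α))
    (hf'2 : IntervalIntegrable (fun x => f' x ^ 2 * Real.sin x) volume (π/2 - α) (π/2 + α))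
    (hfa : f (π/2 - α) = 0) (hfb : f (π/2 + α) = 0) :
    (∫ x in (π/2 - α)..(π/2 + α), f x ^ 2 * Real.sin x)
      ≤ (4 * α^2 / (π^2 - 2 * α^2 / Real.cos α ^ 2))
          * ∫ x in (π/2 - α)..(π/2 + α), f' x ^ 2 * Real.sin x
    ∧ 4 * (π/6)^2 / (π^2 - 2 * (π/6)^2 / Real.cos (π/6) ^ 2) = 3/25 := by
  refine ⟨?_, poincare_constant_pi_div_six⟩
  have hα2 : α < π / 2 := by linarith [pi_pos]
  have htan₀ : 0 < tan α := tan_pos_of_pos_of_lt_pi_div_two hα hα2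
  have htan₁ : tan α ≤ 1 := tan_pi_div_four ▸ strictMonoOn_tan.monotoneOn
    ⟨by linarith, hα2⟩ ⟨by linarith [pi_pos], by linarith [pi_pos]⟩ hα'
  have hK : 4 ≤ π ^ 2 / (4 * α ^ 2) := by
    rw [le_div_iff₀ (by positivity)]; nlinarith
  set m := √(π ^ 2 / (4 * α ^ 2) - tan α ^ 2 / 4)
  have hm2 : m ^ 2 = π ^ 2 / (4 * α ^ 2) - tan α ^ 2 / 4 := sq_sqrt (by nlinarith)
  have hmα : m * α < π / 2 := by
    rw [← lt_div_iff₀ hα, sqrt_lt' (by positivity), div_pow]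
    field_simp
    nlinarith [mul_pos (pow_pos hα 2) (pow_pos htan₀ 2)]
  have hden : π ^ 2 - 2 * α ^ 2 / cos α ^ 2 = 4 * α ^ 2 * (m ^ 2 - 1 / 2 - tan α ^ 2 / 4) := by
    rw [hm2, ← inv_one_add_tan_sq (cos_pos_of_mem_Ioo ⟨by linarith, hα2⟩).ne']
    field_simp
    ring
  rw [hden, div_mul_cancel_left₀ (by positivity), le_inv_mul_iff₀ (by nlinarith)]
  exact integral_sq_mul_sin_le hα.le hα2 (sqrt_nonneg _) hmα hderiv hf2 hf'2 hfa hfb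
end

section
/- Let m ≥ 1000 and j ≥ 0, i ≥ -2 integers with j ≤ i+2, β = (j+1)/2. For every u ∈ H¹(0, ln m) with ∫₀^{ln m} e^{-((5+2i-j)/2)x} u(x) dx = 0, one has ∫₀^{ln m}|u'(x)|² dx + β|u(ln m)|² - β|u(0)|² ≥ 0. Consequently the infimum of ∫₀^{ln m}|u'+βu|² dx / ∫₀^{ln m}u² dx over such u is at least β² = (j+1)²/4. -/
open MeasureTheory Real Set

/-!
Integrating `(e^{-γx} u)'` and using the orthogonality gives
`u(0) = e^{-γL} u(L) - ∫₀ᴸ e^{-γx} u'`, where `γ = (5 + 2i - j)/2 ≥ β` and `L = ln m`.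
By Cauchy–Schwarz the integral is at most `(2γ)^{-1/2} ‖u'‖₂`, and `2e^{-2γL} = 2m^{-2γ} ≤ 1`,
so `β u(0)² ≤ β u(L)² + (β/γ) ‖u'‖₂² ≤ β u(L)² + ‖u'‖₂²`. The second estimate follows by
expanding `(u' + βu)²` and integrating `2uu' = (u²)'`.
-/

theorem sq_integral_mul_le_integral_sq_mul_integral_sq {α : Type*} [MeasurableSpace α]
    {μ : Measure α} {f g : α → ℝ} (hfg : Integrable (fun x => f x * g x) μ)
    (hf : Integrable (fun x => f x ^ 2) μ) (hg : Integrable (fun x => g x ^ 2) μ) :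
    (∫ x, f x * g x ∂μ) ^ 2 ≤ (∫ x, f x ^ 2 ∂μ) * ∫ x, g x ^ 2 ∂μ := by
  have hquad : ∀ t : ℝ, 0 ≤ (∫ x, g x ^ 2 ∂μ) * (t * t) + 2 * (∫ x, f x * g x ∂μ) * t
      + ∫ x, f x ^ 2 ∂μ := by
    intro t
    have hcross : Integrable (fun x => 2 * t * (f x * g x) + t ^ 2 * g x ^ 2) μ :=
      (hfg.const_mul _).add (hg.const_mul _)
    have hexpand : ∫ x, (f x + t * g x) ^ 2 ∂μ
        = ∫ x, f x ^ 2 + (2 * t * (f x * g x) + t ^ 2 * g x ^ 2) ∂μ :=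
      integral_congr_ae (Filter.Eventually.of_forall fun x => by ring)
    rw [integral_add hf hcross, integral_add (hfg.const_mul _) (hg.const_mul _),
      integral_const_mul, integral_const_mul] at hexpand
    have hnonneg : 0 ≤ ∫ x, (f x + t * g x) ^ 2 ∂μ := integral_nonneg fun x => sq_nonneg _
    nlinarith
  have := discrim_le_zero hquad
  rw [discrim] at this
  nlinarith

theorem integral_exp_neg_mul_sq_le {γ L : ℝ} (hγ : 0 < γ) :
    ∫ x in 0..L, exp (-γ * x) ^ 2 ≤ 1 / (2 * γ) := by
  have hsq : ∀ x, exp (-γ * x) ^ 2 = exp (-(2 * γ) * x) := fun x => by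
    rw [← exp_nat_mul]; ring_nf
  simp_rw [hsq]
  rw [intervalIntegral.integral_comp_mul_left (fun x => exp x) (by linarith), integral_exp,
    mul_zero, exp_zero, smul_eq_mul, inv_neg, neg_mul, ← mul_neg, neg_sub, ← div_eq_inv_mul]
  gcongr
  linarith [exp_pos (-(2 * γ) * L)]

theorem intervalIntegrable_of_hasDerivAt_of_sq {u u' : ℝ → ℝ} {a b : ℝ}
    (hd : ∀ x ∈ uIcc a b, HasDerivAt u (u' x) x)
    (hu'2 : IntervalIntegrable (fun x => u' x ^ 2) volume a b) :
    IntervalIntegrable u' volume a b := by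
  have hmeas : AEStronglyMeasurable u' (volume.restrict (uIcc a b)) :=
    (measurable_deriv u).aestronglyMeasurable.congr <|
      (ae_restrict_mem measurableSet_uIcc).mono fun x hx => (hd x hx).deriv
  have : IsFiniteMeasure (volume.restrict (uIcc a b)) := isFiniteMeasure_restrict_Icc _ _
  rw [intervalIntegrable_iff'] at hu'2 ⊢
  exact ((memLp_two_iff_integrable_sq hmeas).2 hu'2).integrable one_le_two

theorem exp_mul_eq_sub_integral_of_integral_exp_mul_eq_zero {u u' : ℝ → ℝ} {a b γ : ℝ}
    (hd : ∀ x ∈ uIcc a b, HasDerivAt u (u' x) x) (hu' : IntervalIntegrable u' volume a b)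
    (hortho : ∫ x in a..b, exp (-γ * x) * u x = 0) :
    exp (-γ * a) * u a = exp (-γ * b) * u b - ∫ x in a..b, exp (-γ * x) * u' x := by
  have hexp : ∀ x, HasDerivAt (fun x => exp (-γ * x)) (-γ * exp (-γ * x)) x := fun x => by
    simpa [mul_comm] using ((hasDerivAt_id x).const_mul (-γ)).exp
  have hcont : Continuous fun x => exp (-γ * x) := by fun_prop
  have hprod : ∀ x ∈ uIcc a b, HasDerivAt (fun x => exp (-γ * x) * u x)
      (-γ * (exp (-γ * x) * u x) + exp (-γ * x) * u' x) x := fun x hx =>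
    ((hexp x).mul (hd x hx)).congr_deriv (by ring)
  have hucont : ContinuousOn u (uIcc a b) := fun x hx => (hd x hx).continuousAt.continuousWithinAt
  have hwu : IntervalIntegrable (fun x => exp (-γ * x) * u x) volume a b :=
    (hcont.continuousOn.mul hucont).intervalIntegrable
  have hwu' : IntervalIntegrable (fun x => exp (-γ * x) * u' x) volume a b :=
    hu'.continuousOn_mul hcont.continuousOn
  have hftc := intervalIntegral.integral_eq_sub_of_hasDerivAt hprod
    ((hwu.const_mul (-γ)).add hwu')
  rw [intervalIntegral.integral_add (hwu.const_mul (-γ)) hwu', intervalIntegral.integral_const_mul,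
    hortho] at hftc
  linarith

theorem sq_integral_exp_neg_mul_le {v : ℝ → ℝ} {γ L : ℝ} (hγ : 0 < γ) (hL : 0 ≤ L)
    (hv : IntervalIntegrable v volume 0 L)
    (hv2 : IntervalIntegrable (fun x => v x ^ 2) volume 0 L) :
    (∫ x in 0..L, exp (-γ * x) * v x) ^ 2 ≤ (∫ x in 0..L, v x ^ 2) / (2 * γ) := by
  have hcont : Continuous fun x => exp (-γ * x) := by fun_prop
  have hwv : IntervalIntegrable (fun x => exp (-γ * x) * v x) volume 0 L :=
    hv.continuousOn_mul hcont.continuousOn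
  have hw2 : IntervalIntegrable (fun x => exp (-γ * x) ^ 2) volume 0 L :=
    (hcont.pow 2).intervalIntegrable 0 L
  have hcs := sq_integral_mul_le_integral_sq_mul_integral_sq (μ := volume.restrict (Ioc 0 L))
    hwv.1 hw2.1 hv2.1
  simp only [← intervalIntegral.integral_of_le hL] at hcs
  calc _ ≤ _ := hcs
    _ ≤ 1 / (2 * γ) * ∫ x in 0..L, v x ^ 2 := by
      gcongr
      · exact intervalIntegral.integral_nonneg hL fun x _ => sq_nonneg _
      · exact integral_exp_neg_mul_sq_le hγ
    _ = _ := by ring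

theorem integral_deriv_add_mul_sq {u u' : ℝ → ℝ} {a b : ℝ} (β : ℝ)
    (hd : ∀ x ∈ uIcc a b, HasDerivAt u (u' x) x) (hu' : IntervalIntegrable u' volume a b)
    (hu'2 : IntervalIntegrable (fun x => u' x ^ 2) volume a b) :
    ∫ x in a..b, (u' x + β * u x) ^ 2
      = (∫ x in a..b, u' x ^ 2) + β * (u b ^ 2 - u a ^ 2) + β ^ 2 * ∫ x in a..b, u x ^ 2 := by
  have hucont : ContinuousOn u (uIcc a b) := fun x hx => (hd x hx).continuousAt.continuousWithinAt
  have hu2 : IntervalIntegrable (fun x => u x ^ 2) volume a b := (hucont.pow 2).intervalIntegrable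
  have huu' : IntervalIntegrable (fun x => 2 * u x * u' x) volume a b :=
    hu'.continuousOn_mul (continuousOn_const.mul hucont)
  have hsq : ∫ x in a..b, 2 * u x * u' x = u b ^ 2 - u a ^ 2 :=
    intervalIntegral.integral_eq_sub_of_hasDerivAt
      (fun x hx => by simpa using (hd x hx).pow 2) huu'
  have hexpand : ∫ x in a..b, (u' x + β * u x) ^ 2
      = ∫ x in a..b, u' x ^ 2 + (β * (2 * u x * u' x) + β ^ 2 * u x ^ 2) :=
    intervalIntegral.integral_congr fun x _ => by ring
  rw [hexpand, intervalIntegral.integral_add hu'2 ((huu'.const_mul β).add (hu2.const_mul _)),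
    intervalIntegral.integral_add (huu'.const_mul β) (hu2.const_mul _),
    intervalIntegral.integral_const_mul, intervalIntegral.integral_const_mul, hsq]
  ring

theorem mul_sq_le_of_integral_exp_neg_mul_eq_zero {u u' : ℝ → ℝ} {L β γ : ℝ} (hL : 0 ≤ L)
    (hβ : 0 < β) (hβγ : β ≤ γ) (hdecay : 2 * exp (-(2 * γ) * L) ≤ 1)
    (hd : ∀ x ∈ uIcc 0 L, HasDerivAt u (u' x) x) (hu' : IntervalIntegrable u' volume 0 L)
    (hu'2 : IntervalIntegrable (fun x => u' x ^ 2) volume 0 L)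
    (hortho : ∫ x in 0..L, exp (-γ * x) * u x = 0) :
    β * u 0 ^ 2 ≤ (∫ x in 0..L, u' x ^ 2) + β * u L ^ 2 := by
  have hγ : 0 < γ := hβ.trans_le hβγ
  set J := ∫ x in 0..L, u' x ^ 2
  set I := ∫ x in 0..L, exp (-γ * x) * u' x
  have hJ : 0 ≤ J := intervalIntegral.integral_nonneg hL fun x _ => sq_nonneg _
  have hu0 : u 0 = exp (-γ * L) * u L - I := by
    have := exp_mul_eq_sub_integral_of_integral_exp_mul_eq_zero hd hu' hortho
    rwa [mul_zero, exp_zero, one_mul] at this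
  have hI : I ^ 2 ≤ J / (2 * γ) := sq_integral_exp_neg_mul_le hγ hL hu' hu'2
  have hexp_sq : exp (-γ * L) ^ 2 = exp (-(2 * γ) * L) := by rw [← exp_nat_mul]; ring_nf
  -- `(p - q)² ≤ 2p² + 2q²`, then the decay of the weight absorbs the factor `2` at `x = L`.
  have hu0_sq : u 0 ^ 2 ≤ u L ^ 2 + J / γ := by
    have : 2 * I ^ 2 ≤ J / γ := by
      calc 2 * I ^ 2 ≤ 2 * (J / (2 * γ)) := by gcongr
        _ = J / γ := by field_simp
    rw [hu0]
    nlinarith [sq_nonneg (exp (-γ * L) * u L + I), sq_nonneg (u L)]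
  have hβJ : β * (J / γ) ≤ J := by
    rw [mul_div_left_comm]
    exact mul_le_of_le_one_right hJ ((div_le_one hγ).2 hβγ)
  nlinarith

theorem radial_eigenvalue_estimate_general (m : ℕ) (hm : 1000 ≤ m)
    (i j : ℤ) (hj0 : 0 ≤ j) (hj : j ≤ i + 2)
    (u u' : ℝ → ℝ)
    (hd : ∀ x ∈ Set.Icc (0:ℝ) (Real.log m), HasDerivAt u (u' x) x)
    (hu'2 : IntervalIntegrable (fun x => u' x ^ 2) volume 0 (Real.log m))
    (hortho : (∫ x in (0:ℝ)..(Real.log m),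
        Real.exp (-((5 + 2*(i:ℝ) - (j:ℝ))/2) * x) * u x) = 0) :
    0 ≤ (∫ x in (0:ℝ)..(Real.log m), u' x ^ 2)
        + ((j:ℝ)+1)/2 * u (Real.log m) ^ 2 - ((j:ℝ)+1)/2 * u 0 ^ 2
    ∧ (((j:ℝ)+1)^2/4) * (∫ x in (0:ℝ)..(Real.log m), u x ^ 2)
        ≤ ∫ x in (0:ℝ)..(Real.log m), (u' x + ((j:ℝ)+1)/2 * u x) ^ 2 := by
  have hm' : (1000 : ℝ) ≤ m := by exact_mod_cast hm
  have hj0' : (0 : ℝ) ≤ j := by exact_mod_cast hj0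
  have hj' : (j : ℝ) ≤ i + 2 := by exact_mod_cast hj
  have hL : 0 ≤ log m := log_nonneg (by linarith)
  have hd' : ∀ x ∈ uIcc 0 (log m), HasDerivAt u (u' x) x := by rwa [uIcc_of_le hL]
  -- `2γ ≥ 1` gives `e^{-2γ ln m} ≤ 1/m`.
  have hdecay : 2 * exp (-(2 * ((5 + 2 * (i : ℝ) - j) / 2)) * log m) ≤ 1 := by
    have : exp (-(2 * ((5 + 2 * (i : ℝ) - j) / 2)) * log m) ≤ exp (-log m) :=
      exp_le_exp.2 (by nlinarith)
    rw [exp_neg, exp_log (by linarith)] at this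
    linarith [inv_anti₀ (by norm_num) hm']
  have hu' := intervalIntegrable_of_hasDerivAt_of_sq hd' hu'2
  have hboundary := mul_sq_le_of_integral_exp_neg_mul_eq_zero (β := ((j : ℝ) + 1) / 2) hL
    (by linarith) (by linarith) hdecay hd' hu' hu'2 hortho
  refine ⟨by linarith, ?_⟩
  rw [integral_deriv_add_mul_sq _ hd' hu' hu'2,
    show ((j : ℝ) + 1) ^ 2 / 4 = (((j : ℝ) + 1) / 2) ^ 2 by ring]
  linarith

/-- One-dimensional variational estimate on `(0, ln m)`: for integers `i ≥ -2`, `0 ≤ j ≤ i+2`,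
`β = (j+1)/2` and `u ∈ H¹(0, ln m)` with `∫₀^{ln m} e^{-((5+2i-j)/2)x} u dx = 0`, one has
`∫|u'|² + β u(ln m)² - β u(0)² ≥ 0`, and consequently
`∫|u' + βu|² ≥ β² ∫ u²`. -/
theorem radial_eigenvalue_estimate (m : ℕ) (hm : 1000 ≤ m)
    (i j : ℤ) (hi : -2 ≤ i) (hj0 : 0 ≤ j) (hj : j ≤ i + 2)
    (u u' : ℝ → ℝ)
    (hd : ∀ x ∈ Set.Icc (0:ℝ) (Real.log m), HasDerivAt u (u' x) x)
    (hu2 : IntervalIntegrable (fun x => u x ^ 2) volume 0 (Real.log m))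
    (hu'2 : IntervalIntegrable (fun x => u' x ^ 2) volume 0 (Real.log m))
    (hortho : (∫ x in (0:ℝ)..(Real.log m),
        Real.exp (-((5 + 2*(i:ℝ) - (j:ℝ))/2) * x) * u x) = 0) :
    0 ≤ (∫ x in (0:ℝ)..(Real.log m), u' x ^ 2)
        + ((j:ℝ)+1)/2 * u (Real.log m) ^ 2 - ((j:ℝ)+1)/2 * u 0 ^ 2
    ∧ (((j:ℝ)+1)^2/4) * (∫ x in (0:ℝ)..(Real.log m), u x ^ 2)
        ≤ ∫ x in (0:ℝ)..(Real.log m), (u' x + ((j:ℝ)+1)/2 * u x) ^ 2 :=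
  radial_eigenvalue_estimate_general m hm i j hj0 hj u u' hd hu'2 hortho
end

section
/- Let m ≥ 1000, 0 < α ≤ π/6, and let f, g ∈ H¹(D_m) be axisymmetric functions such that for every ρ ∈ [1/m, 1] there exists φ_ρ ∈ [π/2-α, π/2+α] with g(ρ, φ_ρ) = 0. Then ‖fg‖²_{L²(D_m)} ≤ C ‖f/ρ‖_{L²} (‖∂_ρ f/ρ‖_{L²} + ‖f/ρ²‖_{L²}) ‖g‖_{L²} ‖∂_φ g‖_{L²}, for an absolute constant C independent of m. -/
/-!
Two Newton–Leibniz bounds replace the sup norms. Since `g(ρ, ·)` vanishes at `φ_ρ`,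
`g(ρ, φ)² ≤ ∫ 2 |g ∂_φ g| dφ` for every `φ`. For `f`, averaging `f(ρ)² ≤ f(s)² + ∫ 2 |f ∂_ρ f|`
over `s ∈ [1/m, 1]` (in place of the paper's cutoff `η`) bounds the angular mass
`∫ f(ρ, φ)² sin φ dφ` uniformly in `ρ`. Inserting both bounds into `∫∫ f² g² ρ² sin φ` splits it
into a product of a radial and an angular integral, and Cauchy–Schwarz, with `ρ ≤ 1` and
`sin φ ≥ 1/2` on the shell, turns each factor into the norms on the right.
-/

open MeasureTheory Real Set intervalIntegral Interval

theorem sq_sub_sq_le_integral_abs_mul {u u' : ℝ → ℝ} {a b x y : ℝ}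
    (hx : x ∈ Icc a b) (hy : y ∈ Icc a b)
    (hu : ∀ t ∈ Icc a b, HasDerivAt u (u' t) t) (hu' : ContinuousOn u' (Icc a b)) :
    u y ^ 2 - u x ^ 2 ≤ ∫ t in a..b, 2 * |u t * u' t| := by
  have hsub : uIcc x y ⊆ Icc a b := uIcc_subset_Icc hx hy
  have hcont : ContinuousOn (fun t => 2 * (u t * u' t)) (Icc a b) :=
    continuousOn_const.mul ((HasDerivAt.continuousOn hu).mul hu')
  have hftc : ∫ t in x..y, 2 * (u t * u' t) = u y ^ 2 - u x ^ 2 :=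
    integral_eq_sub_of_hasDerivAt (f := fun t => u t ^ 2)
      (fun t ht => ((hu t (hsub ht)).pow 2).congr_deriv (by ring))
      (hcont.mono hsub).intervalIntegrable
  calc u y ^ 2 - u x ^ 2 ≤ ‖∫ t in x..y, 2 * (u t * u' t)‖ := hftc ▸ Real.le_norm_self _
    _ ≤ ∫ t in Ι x y, ‖2 * (u t * u' t)‖ := norm_integral_le_integral_norm_uIoc
    _ ≤ ∫ t in Ioc a b, ‖2 * (u t * u' t)‖ :=
        setIntegral_mono_set (hcont.norm.integrableOn_Icc.mono_set Ioc_subset_Icc_self)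
          (Filter.Eventually.of_forall fun _ => norm_nonneg _)
          (Ioc_subset_Ioc (le_min hx.1 hy.1) (max_le hx.2 hy.2)).eventuallyLE
    _ = ∫ t in a..b, 2 * |u t * u' t| := by
        rw [integral_of_le (hx.1.trans hx.2)]
        simp only [norm_mul, Real.norm_eq_abs, abs_two, abs_mul]

theorem sq_le_integral_abs_mul_of_eq_zero {u u' : ℝ → ℝ} {a b x₀ y : ℝ}
    (hx₀ : x₀ ∈ Icc a b) (hzero : u x₀ = 0) (hy : y ∈ Icc a b)
    (hu : ∀ t ∈ Icc a b, HasDerivAt u (u' t) t) (hu' : ContinuousOn u' (Icc a b)) :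
    u y ^ 2 ≤ ∫ t in a..b, 2 * |u t * u' t| := by
  simpa [hzero] using sq_sub_sq_le_integral_abs_mul hx₀ hy hu hu'

theorem sq_le_average_add_integral_abs_mul {u u' : ℝ → ℝ} {a b y : ℝ} (hab : a < b)
    (hy : y ∈ Icc a b) (hu : ∀ t ∈ Icc a b, HasDerivAt u (u' t) t)
    (hu' : ContinuousOn u' (Icc a b)) :
    u y ^ 2 ≤ (b - a)⁻¹ * (∫ t in a..b, u t ^ 2) + ∫ t in a..b, 2 * |u t * u' t| := by
  set I := ∫ t in a..b, 2 * |u t * u' t|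
  have hba : 0 < b - a := sub_pos.2 hab
  have hsq : ContinuousOn (fun t => u t ^ 2) (Icc a b) := (HasDerivAt.continuousOn hu).pow 2
  have hmono : ∫ _ in a..b, u y ^ 2 ≤ ∫ x in a..b, (u x ^ 2 + I) :=
    integral_mono_on hab.le intervalIntegrable_const
      ((hsq.add continuousOn_const).intervalIntegrable_of_Icc hab.le)
      fun x hx => by linarith [sq_sub_sq_le_integral_abs_mul hx hy hu hu']
  rw [intervalIntegral.integral_const, integral_add (hsq.intervalIntegrable_of_Icc hab.le)
    intervalIntegrable_const, intervalIntegral.integral_const, smul_eq_mul, smul_eq_mul] at hmono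
  calc u y ^ 2 = (b - a)⁻¹ * ((b - a) * u y ^ 2) := by field_simp
    _ ≤ (b - a)⁻¹ * ((∫ t in a..b, u t ^ 2) + (b - a) * I) := by gcongr
    _ = _ := by field_simp

theorem integral_abs_mul_le_sqrt_mul_sqrt {α : Type*} [MeasurableSpace α] {μ : Measure α}
    {u v : α → ℝ} (hu : MemLp u 2 μ) (hv : MemLp v 2 μ) :
    ∫ x, |u x * v x| ∂μ ≤ √(∫ x, u x ^ 2 ∂μ) * √(∫ x, v x ^ 2 ∂μ) := by
  have h := integral_mul_le_Lp_mul_Lq_of_nonneg Real.HolderConjugate.two_two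
    (Filter.Eventually.of_forall fun x => abs_nonneg (u x))
    (Filter.Eventually.of_forall fun x => abs_nonneg (v x))
    (by rw [ENNReal.ofReal_ofNat]; exact hu.abs) (by rw [ENNReal.ofReal_ofNat]; exact hv.abs)
  simpa [abs_mul, Real.sqrt_eq_rpow] using h

section Rectangle

variable {a b c d : ℝ} {h : ℝ → ℝ → ℝ}

theorem continuousOn_intervalIntegral_of_continuousOn_prod
    (hh : ContinuousOn (fun p : ℝ × ℝ => h p.1 p.2) (Icc a b ×ˢ Icc c d)) (hcd : c ≤ d) :
    ContinuousOn (fun x => ∫ y in c..d, h x y) (Icc a b) := by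
  rcases lt_or_ge b a with hba | hab
  · simp [Icc_eq_empty_of_lt hba]
  -- Clamping both variables into the rectangle gives a continuous function on all of `ℝ × ℝ`
  -- with the same integrals for `x ∈ [a, b]`.
  have hproj :
      Continuous fun p : ℝ × ℝ => ((projIcc a b hab p.1 : ℝ), (projIcc c d hcd p.2 : ℝ)) :=
    (continuous_subtype_val.comp (continuous_projIcc.comp continuous_fst)).prodMk
      (continuous_subtype_val.comp (continuous_projIcc.comp continuous_snd))
  have hH : Continuous (Function.uncurry fun x y => h (projIcc a b hab x) (projIcc c d hcd y)) :=
    hh.comp_continuous hproj fun p => ⟨Subtype.mem _, Subtype.mem _⟩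
  refine (continuous_parametric_intervalIntegral_of_continuous' hH c d).continuousOn.congr
    fun x hx => integral_congr fun y hy => ?_
  rw [uIcc_of_le hcd] at hy
  simp [projIcc_of_mem hab hx, projIcc_of_mem hcd hy]

theorem integral_integral_eq_setIntegral_prod (hab : a ≤ b) (hcd : c ≤ d)
    (hh : ContinuousOn (fun p : ℝ × ℝ => h p.1 p.2) (Icc a b ×ˢ Icc c d)) :
    ∫ x in a..b, ∫ y in c..d, h x y = ∫ p in Icc a b ×ˢ Icc c d, h p.1 p.2 := by
  rw [Measure.volume_eq_prod,
    setIntegral_prod _ (hh.integrableOn_compact (isCompact_Icc.prod isCompact_Icc)),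
    integral_of_le hab, ← integral_Icc_eq_integral_Ioc]
  refine setIntegral_congr_fun measurableSet_Icc fun x _ => ?_
  rw [integral_of_le hcd, integral_Icc_eq_integral_Ioc]

theorem integral_integral_mono_on {h₁ h₂ : ℝ → ℝ → ℝ} (hab : a ≤ b) (hcd : c ≤ d)
    (hh₁ : ContinuousOn (fun p : ℝ × ℝ => h₁ p.1 p.2) (Icc a b ×ˢ Icc c d))
    (hh₂ : ContinuousOn (fun p : ℝ × ℝ => h₂ p.1 p.2) (Icc a b ×ˢ Icc c d))
    (hle : ∀ x ∈ Icc a b, ∀ y ∈ Icc c d, h₁ x y ≤ h₂ x y) :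
    ∫ x in a..b, ∫ y in c..d, h₁ x y ≤ ∫ x in a..b, ∫ y in c..d, h₂ x y := by
  rw [integral_integral_eq_setIntegral_prod hab hcd hh₁,
    integral_integral_eq_setIntegral_prod hab hcd hh₂]
  exact setIntegral_mono_on (hh₁.integrableOn_compact (isCompact_Icc.prod isCompact_Icc))
    (hh₂.integrableOn_compact (isCompact_Icc.prod isCompact_Icc))
    (measurableSet_Icc.prod measurableSet_Icc) fun p hp => hle _ hp.1 _ hp.2

theorem integral_integral_abs_mul_mul_le {u v w : ℝ → ℝ → ℝ} (hab : a ≤ b) (hcd : c ≤ d)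
    (hu : ContinuousOn (fun p : ℝ × ℝ => u p.1 p.2) (Icc a b ×ˢ Icc c d))
    (hv : ContinuousOn (fun p : ℝ × ℝ => v p.1 p.2) (Icc a b ×ˢ Icc c d))
    (hw : ContinuousOn (fun p : ℝ × ℝ => w p.1 p.2) (Icc a b ×ˢ Icc c d))
    (hw₀ : ∀ x ∈ Icc a b, ∀ y ∈ Icc c d, 0 ≤ w x y) :
    ∫ x in a..b, ∫ y in c..d, |u x y * v x y| * w x y ≤
      √(∫ x in a..b, ∫ y in c..d, u x y ^ 2 * w x y) *
        √(∫ x in a..b, ∫ y in c..d, v x y ^ 2 * w x y) := by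
  set R := Icc a b ×ˢ Icc c d
  have hRm : MeasurableSet R := measurableSet_Icc.prod measurableSet_Icc
  have memLp_two : ∀ U : ℝ × ℝ → ℝ, ContinuousOn U R → MemLp U 2 (volume.restrict R) :=
    fun U hU => (memLp_two_iff_integrable_sq (hU.aestronglyMeasurable hRm)).2
      ((hU.pow 2).integrableOn_compact (isCompact_Icc.prod isCompact_Icc))
  have hsq : ∀ U : ℝ → ℝ → ℝ, ∫ p in R, U p.1 p.2 ^ 2 * w p.1 p.2 =
      ∫ p in R, (U p.1 p.2 * √(w p.1 p.2)) ^ 2 :=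
    fun U => setIntegral_congr_fun hRm fun p hp => by
      rw [mul_pow, sq_sqrt (hw₀ _ hp.1 _ hp.2)]
  rw [integral_integral_eq_setIntegral_prod hab hcd ((hu.mul hv).abs.mul hw),
    integral_integral_eq_setIntegral_prod hab hcd ((hu.pow 2).mul hw),
    integral_integral_eq_setIntegral_prod hab hcd ((hv.pow 2).mul hw), hsq u, hsq v]
  refine le_of_eq_of_le (setIntegral_congr_fun hRm fun p hp => ?_)
    (integral_abs_mul_le_sqrt_mul_sqrt (memLp_two _ (hu.mul hw.sqrt))
      (memLp_two _ (hv.mul hw.sqrt)))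
  rw [show u p.1 p.2 * √(w p.1 p.2) * (v p.1 p.2 * √(w p.1 p.2)) =
    u p.1 p.2 * v p.1 p.2 * (√(w p.1 p.2) * √(w p.1 p.2)) by ring,
    mul_self_sqrt (hw₀ _ hp.1 _ hp.2), abs_mul (u p.1 p.2 * v p.1 p.2),
    abs_of_nonneg (hw₀ _ hp.1 _ hp.2)]

theorem integral_integral_swap_of_continuousOn (hab : a ≤ b) (hcd : c ≤ d)
    (hh : ContinuousOn (fun p : ℝ × ℝ => h p.1 p.2) (Icc a b ×ˢ Icc c d)) :
    ∫ y in c..d, ∫ x in a..b, h x y = ∫ x in a..b, ∫ y in c..d, h x y := by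
  rw [integral_integral_eq_setIntegral_prod hab hcd hh,
    integral_integral_eq_setIntegral_prod (h := fun y x => h x y) hcd hab
      (hh.comp continuous_swap.continuousOn fun _ hp => ⟨hp.2, hp.1⟩)]
  simpa [Measure.volume_eq_prod] using
    setIntegral_prod_swap (Icc a b) (Icc c d) (fun p => h p.1 p.2)

theorem continuousOn_intervalIntegral_left_of_continuousOn_prod
    (hh : ContinuousOn (fun p : ℝ × ℝ => h p.1 p.2) (Icc a b ×ˢ Icc c d)) (hab : a ≤ b) :
    ContinuousOn (fun y => ∫ x in a..b, h x y) (Icc c d) :=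
  continuousOn_intervalIntegral_of_continuousOn_prod (h := fun y x => h x y)
    (hh.comp continuous_swap.continuousOn fun _ hp => ⟨hp.2, hp.1⟩) hab

theorem integral_sq_mul_le_average_add {f fr : ℝ → ℝ → ℝ} {ω : ℝ → ℝ} {x : ℝ}
    (hab : a < b) (hcd : c ≤ d)
    (hf : ContinuousOn (fun p : ℝ × ℝ => f p.1 p.2) (Icc a b ×ˢ Icc c d))
    (hfr : ContinuousOn (fun p : ℝ × ℝ => fr p.1 p.2) (Icc a b ×ˢ Icc c d))
    (hω : ContinuousOn ω (Icc c d)) (hω₀ : ∀ y ∈ Icc c d, 0 ≤ ω y)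
    (hdf : ∀ x ∈ Icc a b, ∀ y ∈ Icc c d, HasDerivAt (fun s => f s y) (fr x y) x)
    (hx : x ∈ Icc a b) :
    ∫ y in c..d, f x y ^ 2 * ω y ≤
      (b - a)⁻¹ * (∫ x in a..b, ∫ y in c..d, f x y ^ 2 * ω y) +
        ∫ x in a..b, ∫ y in c..d, 2 * |f x y * fr x y| * ω y := by
  have hωR : ContinuousOn (fun p : ℝ × ℝ => ω p.2) (Icc a b ×ˢ Icc c d) :=
    hω.comp continuous_snd.continuousOn fun _ hp => hp.2
  have hswap : ∀ k : ℝ → ℝ → ℝ,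
      ContinuousOn (fun p : ℝ × ℝ => k p.1 p.2) (Icc a b ×ˢ Icc c d) →
      ∫ y in c..d, (∫ s in a..b, k s y) * ω y = ∫ s in a..b, ∫ y in c..d, k s y * ω y :=
    fun k hk => by
      simp_rw [← intervalIntegral.integral_mul_const]
      exact integral_integral_swap_of_continuousOn hab.le hcd (hk.mul hωR)
  set F₁ := fun y => ∫ s in a..b, f s y ^ 2
  set F₂ := fun y => ∫ s in a..b, 2 * |f s y * fr s y|
  have hF₁ : ContinuousOn F₁ (Icc c d) :=
    continuousOn_intervalIntegral_left_of_continuousOn_prod (hf.pow 2) hab.le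
  have hF₂ : ContinuousOn F₂ (Icc c d) :=
    continuousOn_intervalIntegral_left_of_continuousOn_prod
      (continuousOn_const.mul (hf.mul hfr).abs) hab.le
  have hslice : ∀ y ∈ Icc c d, f x y ^ 2 ≤ (b - a)⁻¹ * F₁ y + F₂ y := fun y hy =>
    sq_le_average_add_integral_abs_mul hab hx (fun s hs => hdf s hs y hy)
      (ContinuousOn.uncurry_right (f := fr) y hy hfr)
  calc ∫ y in c..d, f x y ^ 2 * ω y ≤ ∫ y in c..d, ((b - a)⁻¹ * F₁ y + F₂ y) * ω y :=
        integral_mono_on hcd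
          (ContinuousOn.intervalIntegrable_of_Icc hcd
            (((ContinuousOn.uncurry_left (f := f) x hx hf).pow 2).mul hω))
          (ContinuousOn.intervalIntegrable_of_Icc hcd
            (((continuousOn_const.mul hF₁).add hF₂).mul hω))
          fun y hy => mul_le_mul_of_nonneg_right (hslice y hy) (hω₀ y hy)
    _ = (b - a)⁻¹ * (∫ y in c..d, F₁ y * ω y) + ∫ y in c..d, F₂ y * ω y := by
        rw [← intervalIntegral.integral_const_mul, ← intervalIntegral.integral_add]
        · simp_rw [add_mul, mul_assoc]
        · exact (continuousOn_const.mul (hF₁.mul hω)).intervalIntegrable_of_Icc hcd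
        · exact (hF₂.mul hω).intervalIntegrable_of_Icc hcd
    _ = _ := by
        rw [hswap _ (hf.pow 2), hswap _ (continuousOn_const.mul (hf.mul hfr).abs)]

theorem integral_integral_mul_sq_mul_le {f g : ℝ → ℝ → ℝ} {r ω J : ℝ → ℝ} {K : ℝ}
    (hab : a ≤ b) (hcd : c ≤ d)
    (hf : ContinuousOn (fun p : ℝ × ℝ => f p.1 p.2) (Icc a b ×ˢ Icc c d))
    (hg : ContinuousOn (fun p : ℝ × ℝ => g p.1 p.2) (Icc a b ×ˢ Icc c d))
    (hr : ContinuousOn r (Icc a b)) (hω : ContinuousOn ω (Icc c d))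
    (hJ : ContinuousOn J (Icc a b))
    (hr₀ : ∀ x ∈ Icc a b, 0 ≤ r x) (hω₀ : ∀ y ∈ Icc c d, 0 ≤ ω y)
    (hg_le : ∀ x ∈ Icc a b, ∀ y ∈ Icc c d, g x y ^ 2 ≤ J x)
    (hf_le : ∀ x ∈ Icc a b, ∫ y in c..d, f x y ^ 2 * ω y ≤ K) :
    ∫ x in a..b, ∫ y in c..d, (f x y * g x y) ^ 2 * (r x * ω y) ≤
      K * ∫ x in a..b, r x * J x := by
  have hfg : ContinuousOn (fun p : ℝ × ℝ => (f p.1 p.2 * g p.1 p.2) ^ 2 * (r p.1 * ω p.2))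
      (Icc a b ×ˢ Icc c d) :=
    ((hf.mul hg).pow 2).mul ((hr.comp continuous_fst.continuousOn fun _ hp => hp.1).mul
      (hω.comp continuous_snd.continuousOn fun _ hp => hp.2))
  have hJ₀ : ∀ x ∈ Icc a b, 0 ≤ J x := fun x hx =>
    (sq_nonneg _).trans (hg_le x hx c (left_mem_Icc.2 hcd))
  have hpoint : ∀ x ∈ Icc a b, ∀ y ∈ Icc c d,
      (f x y * g x y) ^ 2 * (r x * ω y) ≤ r x * J x * (f x y ^ 2 * ω y) := fun x hx y hy =>
    calc (f x y * g x y) ^ 2 * (r x * ω y) = g x y ^ 2 * (r x * (f x y ^ 2 * ω y)) := by ring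
      _ ≤ J x * (r x * (f x y ^ 2 * ω y)) := by
          gcongr
          · exact mul_nonneg (hr₀ x hx) (mul_nonneg (sq_nonneg _) (hω₀ y hy))
          · exact hg_le x hx y hy
      _ = r x * J x * (f x y ^ 2 * ω y) := by ring
  have hslice : ∀ x ∈ Icc a b,
      ∫ y in c..d, (f x y * g x y) ^ 2 * (r x * ω y) ≤ K * (r x * J x) := fun x hx =>
    calc ∫ y in c..d, (f x y * g x y) ^ 2 * (r x * ω y)
        ≤ ∫ y in c..d, r x * J x * (f x y ^ 2 * ω y) :=
          integral_mono_on hcd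
            (ContinuousOn.intervalIntegrable_of_Icc hcd (ContinuousOn.uncurry_left
              (f := fun x y => (f x y * g x y) ^ 2 * (r x * ω y)) x hx hfg))
            (ContinuousOn.intervalIntegrable_of_Icc hcd (continuousOn_const.mul
              (((ContinuousOn.uncurry_left (f := f) x hx hf).pow 2).mul hω)))
            (hpoint x hx)
      _ = r x * J x * ∫ y in c..d, f x y ^ 2 * ω y := intervalIntegral.integral_const_mul _ _
      _ ≤ r x * J x * K := by
          gcongr
          · exact mul_nonneg (hr₀ x hx) (hJ₀ x hx)
          · exact hf_le x hx
      _ = K * (r x * J x) := by ring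
  calc _ ≤ ∫ x in a..b, K * (r x * J x) :=
        integral_mono_on hab
          (ContinuousOn.intervalIntegrable_of_Icc hab
            (continuousOn_intervalIntegral_of_continuousOn_prod hfg hcd))
          (ContinuousOn.intervalIntegrable_of_Icc hab (continuousOn_const.mul (hr.mul hJ)))
          hslice
    _ = K * ∫ x in a..b, r x * J x := intervalIntegral.integral_const_mul _ _

end Rectangle

theorem one_half_le_sin_of_abs_sub_pi_div_two_le {φ : ℝ} (h : |φ - π / 2| ≤ π / 3) :
    1 / 2 ≤ sin φ := by
  rw [← cos_sub_pi_div_two, ← cos_abs, ← cos_pi_div_three]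
  exact cos_le_cos_of_nonneg_of_le_pi (abs_nonneg _) (by linarith [pi_pos]) h

noncomputable def shellNorm (a b c : ℝ) (u : ℝ → ℝ → ℝ) : ℝ :=
  √(∫ ρ in a..1, ∫ φ in b..c, u ρ φ ^ 2 * (2 * π * ρ ^ 2 * sin φ))

section Shell

variable {a b c : ℝ} {f fr g gp : ℝ → ℝ → ℝ}

theorem integral_integral_abs_mul_sin_le_shellNorm {u v : ℝ → ℝ → ℝ}
    (ha : 0 < a) (ha₁ : a ≤ 1) (hbc : b ≤ c) (hsin : ∀ φ ∈ Icc b c, 0 ≤ sin φ)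
    (hu : ContinuousOn (fun p : ℝ × ℝ => u p.1 p.2) (Icc a 1 ×ˢ Icc b c))
    (hv : ContinuousOn (fun p : ℝ × ℝ => v p.1 p.2) (Icc a 1 ×ˢ Icc b c)) :
    ∫ ρ in a..1, ∫ φ in b..c, |u ρ φ * v ρ φ| * sin φ ≤
      (2 * π)⁻¹ * (shellNorm a b c (fun ρ φ => u ρ φ / ρ) *
        shellNorm a b c (fun ρ φ => v ρ φ / ρ)) := by
  have hρ₀ : ∀ p ∈ Icc a 1 ×ˢ Icc b c, p.1 ≠ 0 := fun p hp => (ha.trans_le hp.1.1).ne'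
  calc _ = (2 * π)⁻¹ * ∫ ρ in a..1, ∫ φ in b..c,
        |u ρ φ / ρ * (v ρ φ / ρ)| * (2 * π * ρ ^ 2 * sin φ) := by
        simp only [← intervalIntegral.integral_const_mul]
        refine integral_congr fun ρ hρ => integral_congr fun φ _ => ?_
        have hρ0 : 0 < ρ := ha.trans_le (uIcc_of_le ha₁ ▸ hρ).1
        rw [div_mul_div_comm, abs_div, abs_of_pos (mul_pos hρ0 hρ0)]
        field_simp
    _ ≤ _ := by
        gcongr
        exact integral_integral_abs_mul_mul_le ha₁ hbc (hu.div continuousOn_fst hρ₀)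
          (hv.div continuousOn_fst hρ₀) (Continuous.continuousOn (by fun_prop))
          fun ρ _ φ hφ => mul_nonneg (by positivity) (hsin φ hφ)

theorem integral_integral_sq_mul_sin_le_shellNorm (ha : 0 < a) (ha₁ : a ≤ 1) (hbc : b ≤ c)
    (hsin : ∀ φ ∈ Icc b c, 0 ≤ sin φ)
    (hf : ContinuousOn (fun p : ℝ × ℝ => f p.1 p.2) (Icc a 1 ×ˢ Icc b c)) :
    ∫ ρ in a..1, ∫ φ in b..c, f ρ φ ^ 2 * sin φ ≤
      (2 * π)⁻¹ * (shellNorm a b c (fun ρ φ => f ρ φ / ρ) *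
        shellNorm a b c (fun ρ φ => f ρ φ / ρ ^ 2)) := by
  have hf₁ : ContinuousOn (fun p : ℝ × ℝ => f p.1 p.2 / p.1) (Icc a 1 ×ˢ Icc b c) :=
    hf.div continuousOn_fst fun p hp => (ha.trans_le hp.1.1).ne'
  have hdiv : (fun ρ φ => f ρ φ / ρ / ρ) = fun ρ φ => f ρ φ / ρ ^ 2 := by
    ext ρ φ; rw [div_div, sq]
  rw [← hdiv]
  refine le_trans (integral_integral_mono_on ha₁ hbc
    ((hf.pow 2).mul (Continuous.continuousOn (by fun_prop)))
    ((hf.mul hf₁).abs.mul (Continuous.continuousOn (by fun_prop))) fun ρ hρ φ hφ => ?_)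
    (integral_integral_abs_mul_sin_le_shellNorm ha ha₁ hbc hsin hf hf₁)
  have hρ0 : 0 < ρ := ha.trans_le hρ.1
  calc f ρ φ ^ 2 * sin φ ≤ f ρ φ ^ 2 / ρ * sin φ := by
        gcongr
        · exact hsin φ hφ
        · exact le_div_self (sq_nonneg _) hρ0 hρ.2
    _ = |f ρ φ * (f ρ φ / ρ)| * sin φ := by
        rw [← sq_abs, abs_mul, abs_div, abs_of_pos hρ0]
        ring

theorem integral_sq_mul_sin_le_shellNorm {ρ : ℝ}
    (ha : 0 < a) (ha₂ : a ≤ 1 / 2) (hbc : b ≤ c) (hsin : ∀ φ ∈ Icc b c, 0 ≤ sin φ)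
    (hf : ContinuousOn (fun p : ℝ × ℝ => f p.1 p.2) (Icc a 1 ×ˢ Icc b c))
    (hfr : ContinuousOn (fun p : ℝ × ℝ => fr p.1 p.2) (Icc a 1 ×ˢ Icc b c))
    (hdf : ∀ ρ ∈ Icc a 1, ∀ φ ∈ Icc b c, HasDerivAt (fun s => f s φ) (fr ρ φ) ρ)
    (hρ : ρ ∈ Icc a 1) :
    ∫ φ in b..c, f ρ φ ^ 2 * sin φ ≤
      π⁻¹ * (shellNorm a b c (fun ρ φ => f ρ φ / ρ) *
        (shellNorm a b c (fun ρ φ => fr ρ φ / ρ) +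
          shellNorm a b c (fun ρ φ => f ρ φ / ρ ^ 2))) := by
  have ha₁ : a ≤ 1 := by linarith
  have hinv : (1 - a)⁻¹ ≤ 2 := by
    rw [inv_le_comm₀ (by linarith) two_pos]; linarith
  have hmass : 0 ≤ ∫ ρ in a..1, ∫ φ in b..c, f ρ φ ^ 2 * sin φ :=
    integral_nonneg ha₁ fun ρ _ => integral_nonneg hbc
      fun φ hφ => mul_nonneg (sq_nonneg _) (hsin φ hφ)
  calc _ ≤ (1 - a)⁻¹ * (∫ ρ in a..1, ∫ φ in b..c, f ρ φ ^ 2 * sin φ) +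
        2 * ∫ ρ in a..1, ∫ φ in b..c, |f ρ φ * fr ρ φ| * sin φ := by
        simpa only [mul_assoc, intervalIntegral.integral_const_mul] using
          integral_sq_mul_le_average_add (by linarith) hbc hf hfr continuousOn_sin hsin hdf hρ
    _ ≤ 2 * ((2 * π)⁻¹ * (shellNorm a b c (fun ρ φ => f ρ φ / ρ) *
          shellNorm a b c (fun ρ φ => f ρ φ / ρ ^ 2))) +
        2 * ((2 * π)⁻¹ * (shellNorm a b c (fun ρ φ => f ρ φ / ρ) *
          shellNorm a b c (fun ρ φ => fr ρ φ / ρ))) := by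
        gcongr
        · exact integral_integral_sq_mul_sin_le_shellNorm ha ha₁ hbc hsin hf
        · exact integral_integral_abs_mul_sin_le_shellNorm ha ha₁ hbc hsin hf hfr
    _ = _ := by field_simp; ring

theorem integral_mul_integral_abs_mul_le_shellNorm (ha₁ : a ≤ 1) (hbc : b ≤ c)
    (hsin : ∀ φ ∈ Icc b c, 1 / 2 ≤ sin φ)
    (hg : ContinuousOn (fun p : ℝ × ℝ => g p.1 p.2) (Icc a 1 ×ˢ Icc b c))
    (hgp : ContinuousOn (fun p : ℝ × ℝ => gp p.1 p.2) (Icc a 1 ×ˢ Icc b c)) :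
    ∫ ρ in a..1, 2 * π * ρ ^ 2 * ∫ φ in b..c, 2 * |g ρ φ * gp ρ φ| ≤
      4 * (shellNorm a b c g * shellNorm a b c gp) := by
  have hw₀ : ∀ ρ ∈ Icc a 1, ∀ φ ∈ Icc b c, 0 ≤ 2 * π * ρ ^ 2 * sin φ := fun ρ _ φ hφ =>
    mul_nonneg (by positivity) (by linarith [hsin φ hφ])
  have hw : ContinuousOn (fun p : ℝ × ℝ => 2 * π * p.1 ^ 2 * sin p.2) (Icc a 1 ×ˢ Icc b c) :=
    Continuous.continuousOn (by fun_prop)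
  calc _ = ∫ ρ in a..1, ∫ φ in b..c, 2 * π * ρ ^ 2 * (2 * |g ρ φ * gp ρ φ|) :=
        integral_congr fun ρ _ => (intervalIntegral.integral_const_mul _ _).symm
    _ ≤ ∫ ρ in a..1, ∫ φ in b..c, 4 * (|g ρ φ * gp ρ φ| * (2 * π * ρ ^ 2 * sin φ)) :=
        integral_integral_mono_on ha₁ hbc
          ((Continuous.continuousOn (by fun_prop)).mul (continuousOn_const.mul (hg.mul hgp).abs))
          (continuousOn_const.mul ((hg.mul hgp).abs.mul hw)) fun ρ _ φ hφ => by
            have : 0 ≤ 2 * π * ρ ^ 2 * |g ρ φ * gp ρ φ| := by positivity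
            nlinarith [hsin φ hφ]
    _ = 4 * ∫ ρ in a..1, ∫ φ in b..c, |g ρ φ * gp ρ φ| * (2 * π * ρ ^ 2 * sin φ) := by
        simp only [intervalIntegral.integral_const_mul]
    _ ≤ _ := by gcongr; exact integral_integral_abs_mul_mul_le ha₁ hbc hg hgp hw hw₀

theorem integral_mul_sq_le_shellNorm (ha : 0 < a) (ha₂ : a ≤ 1 / 2) (hbc : b ≤ c)
    (hsin : ∀ φ ∈ Icc b c, 1 / 2 ≤ sin φ)
    (hf : ContinuousOn (fun p : ℝ × ℝ => f p.1 p.2) (Icc a 1 ×ˢ Icc b c))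
    (hfr : ContinuousOn (fun p : ℝ × ℝ => fr p.1 p.2) (Icc a 1 ×ˢ Icc b c))
    (hg : ContinuousOn (fun p : ℝ × ℝ => g p.1 p.2) (Icc a 1 ×ˢ Icc b c))
    (hgp : ContinuousOn (fun p : ℝ × ℝ => gp p.1 p.2) (Icc a 1 ×ˢ Icc b c))
    (hdf : ∀ ρ ∈ Icc a 1, ∀ φ ∈ Icc b c, HasDerivAt (fun s => f s φ) (fr ρ φ) ρ)
    (hdg : ∀ ρ ∈ Icc a 1, ∀ φ ∈ Icc b c, HasDerivAt (fun t => g ρ t) (gp ρ φ) φ)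
    (hvan : ∀ ρ ∈ Icc a 1, ∃ φ₀ ∈ Icc b c, g ρ φ₀ = 0) :
    ∫ ρ in a..1, ∫ φ in b..c, (f ρ φ * g ρ φ) ^ 2 * (2 * π * ρ ^ 2 * sin φ) ≤
      2 * shellNorm a b c (fun ρ φ => f ρ φ / ρ) *
        (shellNorm a b c (fun ρ φ => fr ρ φ / ρ) + shellNorm a b c (fun ρ φ => f ρ φ / ρ ^ 2)) *
        shellNorm a b c g * shellNorm a b c gp := by
  have hsin₀ : ∀ φ ∈ Icc b c, 0 ≤ sin φ := fun φ hφ => by linarith [hsin φ hφ]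
  have hg_sq : ∀ ρ ∈ Icc a 1, ∀ φ ∈ Icc b c, g ρ φ ^ 2 ≤ ∫ t in b..c, 2 * |g ρ t * gp ρ t| :=
    fun ρ hρ φ hφ => by
      obtain ⟨φ₀, hφ₀, hzero⟩ := hvan ρ hρ
      exact sq_le_integral_abs_mul_of_eq_zero hφ₀ hzero hφ (hdg ρ hρ)
        (ContinuousOn.uncurry_left (f := gp) ρ hρ hgp)
  set F := shellNorm a b c (fun ρ φ => f ρ φ / ρ) *
    (shellNorm a b c (fun ρ φ => fr ρ φ / ρ) + shellNorm a b c (fun ρ φ => f ρ φ / ρ ^ 2))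
  set G := shellNorm a b c g * shellNorm a b c gp
  have hF : 0 ≤ F := mul_nonneg (sqrt_nonneg _) (add_nonneg (sqrt_nonneg _) (sqrt_nonneg _))
  have hG : 0 ≤ G := mul_nonneg (sqrt_nonneg _) (sqrt_nonneg _)
  have hπ : 4 * π⁻¹ ≤ 2 := by
    rw [← div_eq_mul_inv, div_le_iff₀ pi_pos]; linarith [pi_gt_three]
  calc _ ≤ π⁻¹ * F * ∫ ρ in a..1, 2 * π * ρ ^ 2 * ∫ φ in b..c, 2 * |g ρ φ * gp ρ φ| :=
        integral_integral_mul_sq_mul_le (by linarith) hbc hf hg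
          (Continuous.continuousOn (by fun_prop)) continuousOn_sin
          (continuousOn_intervalIntegral_of_continuousOn_prod
            (continuousOn_const.mul (hg.mul hgp).abs) hbc)
          (fun ρ _ => by positivity) hsin₀ hg_sq fun ρ hρ =>
          integral_sq_mul_sin_le_shellNorm ha ha₂ hbc hsin₀ hf hfr hdf hρ
    _ ≤ π⁻¹ * F * (4 * G) := by
        gcongr
        exact integral_mul_integral_abs_mul_le_shellNorm (by linarith) hbc hsin hg hgp
    _ = 4 * π⁻¹ * (F * G) := by ring
    _ ≤ 2 * (F * G) := by gcongr
    _ = _ := by simp only [F, G]; ring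

end Shell

/-- Nonlinear product estimate on `D_m = {1/m < ρ < 1, π/2-α < φ < π/2+α}`
(`dx = 2πρ² sin φ dρ dφ`): there is an absolute constant `C` (independent of `m`) such that
whenever `g(ρ, ·)` vanishes somewhere on the angular interval for every `ρ`,
`‖fg‖²_{L²} ≤ C ‖f/ρ‖ (‖∂_ρ f/ρ‖ + ‖f/ρ²‖) ‖g‖ ‖∂_φ g‖`. -/
theorem nonlinear_product_estimate :
    ∃ C : ℝ, 0 < C ∧
    ∀ (m : ℕ), 1000 ≤ m → ∀ (α : ℝ), 0 < α → α ≤ π/6 →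
    ∀ (f fr g gp : ℝ → ℝ → ℝ),
    ContinuousOn (fun p : ℝ × ℝ => f p.1 p.2)
      (Set.Icc (1/(m:ℝ)) 1 ×ˢ Set.Icc (π/2 - α) (π/2 + α)) →
    ContinuousOn (fun p : ℝ × ℝ => fr p.1 p.2)
      (Set.Icc (1/(m:ℝ)) 1 ×ˢ Set.Icc (π/2 - α) (π/2 + α)) →
    ContinuousOn (fun p : ℝ × ℝ => g p.1 p.2)
      (Set.Icc (1/(m:ℝ)) 1 ×ˢ Set.Icc (π/2 - α) (π/2 + α)) →
    ContinuousOn (fun p : ℝ × ℝ => gp p.1 p.2)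
      (Set.Icc (1/(m:ℝ)) 1 ×ˢ Set.Icc (π/2 - α) (π/2 + α)) →
    (∀ ρ ∈ Set.Icc (1/(m:ℝ)) 1, ∀ φ ∈ Set.Icc (π/2 - α) (π/2 + α),
      HasDerivAt (fun s => f s φ) (fr ρ φ) ρ) →
    (∀ ρ ∈ Set.Icc (1/(m:ℝ)) 1, ∀ φ ∈ Set.Icc (π/2 - α) (π/2 + α),
      HasDerivAt (fun t => g ρ t) (gp ρ φ) φ) →
    (∀ ρ ∈ Set.Icc (1/(m:ℝ)) 1, ∃ φ₀ ∈ Set.Icc (π/2 - α) (π/2 + α), g ρ φ₀ = 0) →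
    (∫ ρ in (1/(m:ℝ))..1, ∫ φ in (π/2 - α)..(π/2 + α),
        (f ρ φ * g ρ φ) ^ 2 * (2*π*ρ^2*Real.sin φ))
      ≤ C * Real.sqrt (∫ ρ in (1/(m:ℝ))..1, ∫ φ in (π/2 - α)..(π/2 + α),
              (f ρ φ / ρ) ^ 2 * (2*π*ρ^2*Real.sin φ))
          * (Real.sqrt (∫ ρ in (1/(m:ℝ))..1, ∫ φ in (π/2 - α)..(π/2 + α),
                (fr ρ φ / ρ) ^ 2 * (2*π*ρ^2*Real.sin φ))
             + Real.sqrt (∫ ρ in (1/(m:ℝ))..1, ∫ φ in (π/2 - α)..(π/2 + α),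
                (f ρ φ / ρ^2) ^ 2 * (2*π*ρ^2*Real.sin φ)))
          * Real.sqrt (∫ ρ in (1/(m:ℝ))..1, ∫ φ in (π/2 - α)..(π/2 + α),
              (g ρ φ) ^ 2 * (2*π*ρ^2*Real.sin φ))
          * Real.sqrt (∫ ρ in (1/(m:ℝ))..1, ∫ φ in (π/2 - α)..(π/2 + α),
              (gp ρ φ) ^ 2 * (2*π*ρ^2*Real.sin φ)) := by
  refine ⟨2, two_pos, fun m hm α hα hα6 f fr g gp hf hfr hg hgp hdf hdg hvan => ?_⟩
  have hm₂ : (2 : ℝ) ≤ m := by exact_mod_cast (by omega : 2 ≤ m)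
  exact integral_mul_sq_le_shellNorm (one_div_pos.2 (by linarith))
    (one_div_le_one_div_of_le two_pos hm₂) (by linarith)
    (fun φ hφ => one_half_le_sin_of_abs_sub_pi_div_two_le
      (abs_sub_le_iff.2 ⟨by linarith [hφ.2], by linarith [hφ.1]⟩))
    hf hfr hg hgp hdf hdg hvan
end
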